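/- With the notation of the paper: let $H$ be a real Hilbert space, $\varphi: D \to H$ be $C^2$, $x_1<\cdots<x_M$ in $D$ with $\Gamma_x = (\varphi(x_1),\varphi'(x_1),\ldots,\varphi(x_M),\varphi'(x_M))$ of full column rank, and let $\eta_V$ be the vanishing-derivatives precertificate. For each $i \in \{1,\ldots,M\}$, the $(2M+1)\times(2M+1)$ determinant whose first $2M$ rows are $(\langle \varphi^{(\epsilon)}(x_j), \varphi(x_1)\rangle, \langle \varphi^{(\epsilon)}(x_j), \varphi'(x_1)\rangle, \ldots, \langle \varphi^{(\epsilon)}(x_j), \varphi'(x_M)\rangle, \delta_{\epsilon 0})$ for $j=1,\ldots,M$ and $\epsilon \in \{0,1\}$ (last entry $1$ for $\epsilon=0$, $0$ for $\epsilon=1$), and whose last row is $(\langle \varphi''(x_i), \varphi(x_1)\rangle, \ldots, \langle \varphi''(x_i), \varphi'(x_M)\rangle, 0)$, equals $-\eta_V''(x_i)\,\det(\Gamma_x^*\Gamma_x)$. -/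

import Mathlib

/-! The minimality of `pV` forces it into the span `K` of the family `w`. Write the orthogonal
projection of `φ''(xᵢ)` onto `K` as `∑ p, d p • w p`. Then the last row of the bordered matrix is,
apart from its corner entry, `d ᵥ* G` for the Gram matrix `G`, and pairing with `pV ∈ K` gives
`η_V''(xᵢ) = ⟪φ''(xᵢ), pV⟫ = d ⬝ᵥ b`, where `b` is the border column. Subtracting the
`d`-combination of the other rows from the last one leaves the row `(0, …, 0, -η_V''(xᵢ))`, so the
determinant is `-η_V''(xᵢ) det G`. -/

namespace Matrix

variable {n R : Type*}

def bordered (G : Matrix n n R) (b c : n → R) (e : R) : Matrix (Option n) (Option n) R :=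
  of fun r s =>
    match r, s with
    | some p, some q => G p q
    | some p, none => b p
    | none, some q => c q
    | none, none => e

variable [Fintype n] [DecidableEq n] [CommRing R]

theorem det_bordered_zero_row (G : Matrix n n R) (b : n → R) (e : R) :
    (bordered G b 0 e).det = e * G.det := by
  have hblocks : bordered G b 0 e = reindex (Equiv.optionEquivSumPUnit n).symm
      (Equiv.optionEquivSumPUnit n).symm
      (fromBlocks G (of fun p (_ : PUnit.{1}) => b p) 0 (of fun _ _ => e)) := by
    ext (_ | p) (_ | q) <;> rfl
  rw [hblocks, det_reindex_self, det_fromBlocks_zero₂₁, det_unique (of fun _ _ => e), mul_comm]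
  rfl

theorem det_bordered_add_vecMul (G : Matrix n n R) (b c d : n → R) (e : R) :
    (bordered G b (c + d ᵥ* G) (e + d ⬝ᵥ b)).det = (bordered G b c e).det := by
  have hrow : bordered G b (c + d ᵥ* G) (e + d ⬝ᵥ b) =
      (bordered G b c e).updateRow none
        (∑ r, (Option.elim r 1 d : R) • bordered G b c e r) := by
    ext (_ | p) (_ | q)
    · simp [Fintype.sum_option, bordered, dotProduct]
    · simp [Fintype.sum_option, bordered, vecMul, dotProduct]
    · rw [updateRow_ne (Option.some_ne_none p)]; rfl
    · rw [updateRow_ne (Option.some_ne_none p)]; rfl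
  rw [hrow, det_updateRow_sum, Option.elim_none, one_smul]

theorem det_bordered_vecMul (G : Matrix n n R) (b d : n → R) :
    (bordered G b (d ᵥ* G) 0).det = -(d ⬝ᵥ b) * G.det := by
  have h := det_bordered_add_vecMul G b 0 d (-(d ⬝ᵥ b))
  rw [zero_add, neg_add_cancel] at h
  rw [h, det_bordered_zero_row]

end Matrix

theorem ContinuousLinearMap.iteratedDeriv_comp_left {𝕜 F G : Type*} [NontriviallyNormedField 𝕜]
    [NormedAddCommGroup F] [NormedSpace 𝕜 F] [NormedAddCommGroup G] [NormedSpace 𝕜 G]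
    (L : F →L[𝕜] G) {f : 𝕜 → F} {t : 𝕜} {n : ℕ} (hf : ContDiffAt 𝕜 n f t) :
    iteratedDeriv n (L ∘ f) t = L (iteratedDeriv n f t) := by
  simp only [iteratedDeriv_eq_iteratedFDeriv, L.iteratedFDeriv_comp_left hf le_rfl,
    ContinuousLinearMap.compContinuousMultilinearMap_coe, Function.comp_apply]

section InnerProductSpace

variable {H : Type*} [NormedAddCommGroup H] [InnerProductSpace ℝ H]

theorem iteratedDeriv_inner_const {f : ℝ → H} {t : ℝ} {n : ℕ} (hf : ContDiffAt ℝ n f t) (p : H) :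
    iteratedDeriv n (fun s => (inner ℝ (f s) p : ℝ)) t = inner ℝ (iteratedDeriv n f t) p := by
  have h := (innerSL ℝ p).iteratedDeriv_comp_left hf
  simpa only [Function.comp_def, innerSL_apply_apply, real_inner_comm p] using h

theorem Submodule.mem_of_forall_inner_eq_imp_norm_le (K : Submodule ℝ H)
    [K.HasOrthogonalProjection] {p : H}
    (hmin : ∀ q : H, (∀ v ∈ K, (inner ℝ v q : ℝ) = inner ℝ v p) → ‖p‖ ≤ ‖q‖) : p ∈ K := by
  refine (K.mem_iff_norm_starProjection p).2 (le_antisymm (K.norm_starProjection_apply_le p) ?_)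
  refine hmin _ fun v hv => ?_
  rw [← K.inner_starProjection_left_eq_right, K.starProjection_eq_self_iff.2 hv]

theorem exists_inner_eq_sum_mul_inner_on_span {ι : Type*} [Fintype ι] (w : ι → H) (v : H) :
    ∃ d : ι → ℝ, ∀ u ∈ Submodule.span ℝ (Set.range w),
      (inner ℝ v u : ℝ) = ∑ p, d p * (inner ℝ (w p) u : ℝ) := by
  set K := Submodule.span ℝ (Set.range w)
  have : FiniteDimensional ℝ K := .span_of_finite ℝ (Set.finite_range w)
  obtain ⟨d, hd⟩ := (Submodule.mem_span_range_iff_exists_fun ℝ).1 (K.starProjection_apply_mem v)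
  refine ⟨d, fun u hu => ?_⟩
  have h := K.starProjection_inner_eq_zero v u hu
  rw [inner_sub_left, sub_eq_zero, ← hd, sum_inner] at h
  simp only [h, real_inner_smul_left]

end InnerProductSpace

theorem stmt5 {H : Type*} [NormedAddCommGroup H] [InnerProductSpace ℝ H]
    (M : ℕ)
    (φ : ℝ → H) (hφ : ContDiff ℝ 2 φ)
    (x : Fin M → ℝ)
    (w : Fin M × Fin 2 → H)
    (hw : w = fun p => if p.2 = 0 then φ (x p.1) else deriv φ (x p.1))
    (pV : H)
    (hpV1 : ∀ i, (inner ℝ (φ (x i)) pV : ℝ) = 1)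
    (hpV2 : ∀ i, (inner ℝ (deriv φ (x i)) pV : ℝ) = 0)
    (hmin : ∀ q : H, (∀ i, (inner ℝ (φ (x i)) q : ℝ) = 1) →
      (∀ i, (inner ℝ (deriv φ (x i)) q : ℝ) = 0) → ‖pV‖ ≤ ‖q‖) :
    ∀ i : Fin M,
      (Matrix.of fun r c : Option (Fin M × Fin 2) =>
        match r, c with
        | some p, some q => (inner ℝ (w p) (w q) : ℝ)
        | some p, none => if p.2 = 0 then (1 : ℝ) else 0
        | none, some q => (inner ℝ (iteratedDeriv 2 φ (x i)) (w q) : ℝ)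
        | none, none => (0 : ℝ)).det
      = -(iteratedDeriv 2 (fun t => (inner ℝ (φ t) pV : ℝ)) (x i)) *
          (Matrix.of fun p q : Fin M × Fin 2 => (inner ℝ (w p) (w q) : ℝ)).det := by
  intro i
  set G : Matrix (Fin M × Fin 2) (Fin M × Fin 2) ℝ := Matrix.of fun p q => inner ℝ (w p) (w q)
  set b : Fin M × Fin 2 → ℝ := fun p => if p.2 = 0 then 1 else 0
  have hb : ∀ q, (∀ j, (inner ℝ (φ (x j)) q : ℝ) = 1) →
      (∀ j, (inner ℝ (deriv φ (x j)) q : ℝ) = 0) → ∀ p, (inner ℝ (w p) q : ℝ) = b p := by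
    rintro q h0 h1 ⟨j, k⟩
    fin_cases k <;> simp [hw, b, h0, h1]
  set K := Submodule.span ℝ (Set.range w)
  have : FiniteDimensional ℝ K := .span_of_finite ℝ (Set.finite_range w)
  have hwK : ∀ p, w p ∈ K := fun p => Submodule.subset_span ⟨p, rfl⟩
  have hpVK : pV ∈ K := by
    refine K.mem_of_forall_inner_eq_imp_norm_le fun q hq => hmin q (fun j => ?_) (fun j => ?_)
    · simpa [hw, hpV1] using hq _ (hwK (j, 0))
    · simpa [hw, hpV2] using hq _ (hwK (j, 1))
  obtain ⟨d, hd⟩ := exists_inner_eq_sum_mul_inner_on_span w (iteratedDeriv 2 φ (x i))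
  have hc : (fun q => (inner ℝ (iteratedDeriv 2 φ (x i)) (w q) : ℝ)) = Matrix.vecMul d G :=
    funext fun q => hd _ (hwK q)
  have hη : iteratedDeriv 2 (fun t => (inner ℝ (φ t) pV : ℝ)) (x i) = dotProduct d b := by
    rw [iteratedDeriv_inner_const hφ.contDiffAt, hd pV hpVK]
    simp only [hb pV hpV1 hpV2, dotProduct]
  rw [hη, ← Matrix.det_bordered_vecMul G b d, ← hc]
  congr 1
  ext (_ | p) (_ | q) <;> rfl
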